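/- Let Y follow the univariate zero-inflated Poisson log-normal distribution ZIPLN(π, μ, σ²). Then the quantity Q₁(Y) := E[Y²]/E[Y] − 1 is well defined (E[Y] > 0) and satisfies Q₁(Y) = exp(μ + (3/2)σ²). -/

import Mathlib

open MeasureTheory ProbabilityTheory Real

/-- The probability mass function of the univariate zero-inflated Poisson log-normal
distribution ZIPLN(π, μ, σ²):
`p(y) = (1−π)·1{y=0} + π·∫ exp(−e^{μ+z})·e^{(μ+z)y}/y! dγ(z)`,
where `γ` is the centered Gaussian measure on ℝ with variance `σ²`.
Here `pr` plays the role of the zero-inflation probability π. -/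
noncomputable def ziplnPMF (pr μ σ : ℝ) (y : ℕ) : ℝ :=
  (1 - pr) * (if y = 0 then 1 else 0) +
    pr * ∫ z, exp (-exp (μ + z)) * exp ((μ + z) * y) / (Nat.factorial y)
        ∂(gaussianReal 0 ⟨σ ^ 2, sq_nonneg σ⟩)

/-!
Given the Gaussian variable `z`, the non-inflated part of `Y` is Poisson with intensity
`λ = e^{μ+z}`, whose first two moments are `λ` and `λ + λ²`; the atom at `0` contributes to
neither. All terms being nonnegative, the sum over `y` commutes with the Gaussian integral, so
`E[Y] = π E[λ]` and `E[Y²] = π (E[λ] + E[λ²])`. The log-normal moments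
`E[λ^k] = exp(kμ + k²σ²/2)` then give `E[Y²]/E[Y] - 1 = E[λ²]/E[λ] = exp(μ + 3σ²/2)`.
-/

open scoped NNReal Nat

noncomputable def poissonWeight (x : ℝ) (n : ℕ) : ℝ := exp (-x) * x ^ n / n !

lemma hasSum_poissonWeight (x : ℝ) : HasSum (poissonWeight x) 1 := by
  have h := (NormedSpace.expSeries_div_hasSum_exp x).mul_left (exp (-x))
  rw [← exp_eq_exp_ℝ, ← exp_add, neg_add_cancel, exp_zero] at h
  unfold poissonWeight
  simpa only [mul_div_assoc] using h

lemma natCast_succ_mul_poissonWeight_succ (x : ℝ) (n : ℕ) :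
    (n + 1 : ℝ) * poissonWeight x (n + 1) = x * poissonWeight x n := by
  simp only [poissonWeight, Nat.factorial_succ, Nat.cast_mul, pow_succ]
  field_simp
  push_cast
  ring

lemma HasSum.natCast_mul_poissonWeight {x s : ℝ} {f : ℝ → ℝ}
    (hf : HasSum (fun n : ℕ => f n * poissonWeight x n) s) :
    HasSum (fun n : ℕ => n * f (n - 1) * poissonWeight x n) (x * s) := by
  refine (hasSum_nat_add_iff' 1).mp ?_
  have hshift : ∀ n : ℕ, ((n + 1 : ℕ) : ℝ) * f ((n + 1 : ℕ) - 1) * poissonWeight x (n + 1)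
      = x * (f n * poissonWeight x n) := by
    intro n
    push_cast
    rw [add_sub_cancel_right, mul_right_comm, natCast_succ_mul_poissonWeight_succ]
    ring
  simp only [hshift, Finset.range_one, Finset.sum_singleton, CharP.cast_eq_zero, zero_mul,
    sub_zero]
  exact hf.mul_left x

lemma hasSum_natCast_mul_poissonWeight (x : ℝ) :
    HasSum (fun n : ℕ => n * poissonWeight x n) x := by
  simpa only [mul_one] using HasSum.natCast_mul_poissonWeight (f := fun _ => 1) (s := 1)
    (by simpa only [one_mul] using hasSum_poissonWeight x)

lemma hasSum_natCast_sq_mul_poissonWeight (x : ℝ) :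
    HasSum (fun n : ℕ => (n : ℝ) ^ 2 * poissonWeight x n) (x + x ^ 2) := by
  have h := HasSum.natCast_mul_poissonWeight (f := fun y => y + 1) (by
    simpa only [add_mul, one_mul] using
      (hasSum_natCast_mul_poissonWeight x).add (hasSum_poissonWeight x))
  convert h using 1
  · ext n
    ring
  · ring

namespace MeasureTheory

lemma hasSum_integral_of_nonneg {α ι : Type*} [MeasurableSpace α] [Countable ι] {μ : Measure α}
    {F : ι → α → ℝ} {f : α → ℝ} (hF_meas : ∀ n, AEStronglyMeasurable (F n) μ)
    (hF_nonneg : ∀ n a, 0 ≤ F n a) (hF_sum : ∀ a, HasSum (fun n => F n a) (f a))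
    (hf : Integrable f μ) :
    HasSum (fun n => ∫ a, F n a ∂μ) (∫ a, f a ∂μ) := by
  refine hasSum_integral_of_dominated_convergence F hF_meas
    (fun n => .of_forall fun a => (Real.norm_of_nonneg (hF_nonneg n a)).le)
    (.of_forall fun a => (hF_sum a).summable) ?_ (.of_forall hF_sum)
  simpa only [fun a => (hF_sum a).tsum_eq] using hf

end MeasureTheory

lemma integral_exp_add_pow_gaussianReal (μ : ℝ) (v : ℝ≥0) (k : ℕ) :
    ∫ z, exp (μ + z) ^ k ∂gaussianReal 0 v = exp (μ * k + v * k ^ 2 / 2) := by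
  have hmap : (gaussianReal 0 v).map (μ + ·) = gaussianReal μ v := by
    simpa using gaussianReal_map_const_add (μ := 0) (v := v) μ
  calc ∫ z, exp (μ + z) ^ k ∂gaussianReal 0 v
      = mgf (μ + ·) (gaussianReal 0 v) k := by simp only [mgf, exp_nat_mul]
    _ = exp (μ * k + v * k ^ 2 / 2) := mgf_gaussianReal hmap k

lemma integrable_exp_add_pow_gaussianReal (μ : ℝ) (v : ℝ≥0) (k : ℕ) :
    Integrable (fun z => exp (μ + z) ^ k) (gaussianReal 0 v) := by
  have h := (integrable_exp_mul_gaussianReal (μ := 0) (v := v) k).const_mul (exp (k * μ))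
  simp_rw [← exp_add, ← mul_add, exp_nat_mul] at h
  exact h

lemma poissonWeight_exp (a : ℝ) (n : ℕ) :
    poissonWeight (exp a) n = exp (-exp a) * exp (a * n) / n ! := by
  rw [poissonWeight, mul_comm a, exp_nat_mul]

lemma hasSum_mul_ziplnPMF {pr μ σ : ℝ} {h : ℕ → ℝ} (h_zero : h 0 = 0) (h_nonneg : ∀ n, 0 ≤ h n)
    {m : ℝ → ℝ} (hm : ∀ x, HasSum (fun n => h n * poissonWeight x n) (m x))
    (hm_int : Integrable (fun z => m (exp (μ + z))) (gaussianReal 0 ⟨σ ^ 2, sq_nonneg σ⟩)) :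
    HasSum (fun n => h n * ziplnPMF pr μ σ n)
      (pr * ∫ z, m (exp (μ + z)) ∂gaussianReal 0 ⟨σ ^ 2, sq_nonneg σ⟩) := by
  have hterm : ∀ n, h n * ziplnPMF pr μ σ n
      = pr * ∫ z, h n * poissonWeight (exp (μ + z)) n ∂gaussianReal 0 ⟨σ ^ 2, sq_nonneg σ⟩ := by
    intro n
    rcases n with _ | n
    · simp [h_zero]
    · simp only [ziplnPMF, ← poissonWeight_exp, integral_const_mul, add_eq_zero, one_ne_zero,
        and_false, if_false]
      ring
  simp only [hterm]
  refine (hasSum_integral_of_nonneg (fun n => ?_) (fun n z => ?_) (fun z => hm _)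
    hm_int).mul_left pr
  · exact (by unfold poissonWeight; fun_prop : Measurable _).aestronglyMeasurable
  · exact mul_nonneg (h_nonneg n) (by unfold poissonWeight; positivity)

theorem zipln_Q1_general (pr μ σ : ℝ) (hpr : pr ∈ Set.Ioc (0 : ℝ) 1) :
    0 < ∑' y : ℕ, (y : ℝ) * ziplnPMF pr μ σ y ∧
    (∑' y : ℕ, (y : ℝ) ^ 2 * ziplnPMF pr μ σ y)
        / (∑' y : ℕ, (y : ℝ) * ziplnPMF pr μ σ y) - 1
      = exp (μ + (3 / 2) * σ ^ 2) := by
  set v : ℝ≥0 := ⟨σ ^ 2, sq_nonneg σ⟩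
  have hv : (v : ℝ) = σ ^ 2 := rfl
  have hint₁ : Integrable (fun z => exp (μ + z)) (gaussianReal 0 v) := by
    simpa only [pow_one] using integrable_exp_add_pow_gaussianReal μ v 1
  have hint₂ := integrable_exp_add_pow_gaussianReal μ v 2
  have hmom₁ : ∫ z, exp (μ + z) ∂gaussianReal 0 v = exp (μ + v / 2) := by
    simpa using integral_exp_add_pow_gaussianReal μ v 1
  have hmom₂ := integral_exp_add_pow_gaussianReal μ v 2
  have hmean : ∑' y : ℕ, (y : ℝ) * ziplnPMF pr μ σ y = pr * exp (μ + v / 2) :=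
    (hasSum_mul_ziplnPMF (by simp) Nat.cast_nonneg hasSum_natCast_mul_poissonWeight
      hint₁).tsum_eq.trans (by rw [hmom₁])
  have hsecond : ∑' y : ℕ, (y : ℝ) ^ 2 * ziplnPMF pr μ σ y
      = pr * (exp (μ + v / 2) + exp (μ * 2 + v * 2 ^ 2 / 2)) :=
    (hasSum_mul_ziplnPMF (by simp) (fun n => sq_nonneg _) hasSum_natCast_sq_mul_poissonWeight
      (hint₁.add hint₂)).tsum_eq.trans
      (by rw [integral_add hint₁ hint₂, hmom₁, hmom₂, Nat.cast_ofNat])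
  refine ⟨by rw [hmean]; exact mul_pos hpr.1 (exp_pos _), ?_⟩
  rw [hmean, hsecond, mul_div_mul_left _ _ hpr.1.ne', add_div, div_self (exp_pos _).ne',
    add_sub_cancel_left, ← exp_sub, hv]
  ring_nf

/-- For a ZIPLN(π, μ, σ²) random variable, the quantity `Q₁(Y) = E[Y²]/E[Y] − 1`
is well defined (`E[Y] > 0`) and equals `exp(μ + (3/2)σ²)`. -/
theorem zipln_Q1 (pr μ σ : ℝ) (hpr : pr ∈ Set.Ioc (0 : ℝ) 1) (hσ : 0 < σ) :
    0 < ∑' y : ℕ, (y : ℝ) * ziplnPMF pr μ σ y ∧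
    (∑' y : ℕ, (y : ℝ) ^ 2 * ziplnPMF pr μ σ y)
        / (∑' y : ℕ, (y : ℝ) * ziplnPMF pr μ σ y) - 1
      = exp (μ + (3 / 2) * σ ^ 2) :=
  zipln_Q1_general pr μ σ hpr
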